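/- Define the modified function Q̃(x, y) = QNC(x, y) + (1/(12xy)) · ( 1/(y-1) - 1/(x-1) ) for real x, y > 1. Then the family (i, j) ↦ |Q̃(p_i, p_j)|², indexed by pairs of positive integers, IS summable: ∑_{i,j} |Q̃(p_i, p_j)|² < ∞ (so the modified matrix is Hilbert–Schmidt but not of trace class). -/

import Mathlib

open Real

/-- `F(x,y) = ∑_{k=1}^∞ x^{k-1} · y^{-x^k} / (1 - y^{-x^k})²`. -/
noncomputable def F (x y : ℝ) : ℝ :=
  ∑' k : ℕ, x ^ (k : ℝ) * y ^ (-(x ^ ((k : ℝ) + 1))) / (1 - y ^ (-(x ^ ((k : ℝ) + 1)))) ^ 2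

/-- `QNC(x,y) = (1/(12xy)) · ( x(y-1)F(x,y) - y(x-1)F(y,x) )`. -/
noncomputable def QNC (x y : ℝ) : ℝ :=
  1 / (12 * x * y) * (x * (y - 1) * F x y - y * (x - 1) * F y x)

/-- The modified function `Q̃(x,y) = QNC(x,y) + (1/(12xy))·(1/(y-1) - 1/(x-1))`. -/
noncomputable def QNCtilde (x y : ℝ) : ℝ :=
  QNC x y + 1 / (12 * x * y) * (1 / (y - 1) - 1 / (x - 1))

/-- `nthPrime i` is the `(i+1)`-st prime, so `nthPrime 0 = 2`, `nthPrime 1 = 3`, ... -/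
noncomputable def nthPrime (i : ℕ) : ℕ := Nat.nth Nat.Prime i

/-! For `x, y ≥ 2`, Bernoulli's inequality gives `y ^ x ≥ x * y`, so `q := y ^ (-x) ≤ 1 / (x * y)`.
Since `x ^ (k + 1) ≥ x * (k + 1)`, the `k`-th term of `F x y` is at most `(16/9) q (x q) ^ k`
with `x q ≤ 1/2`, whence `F x y ≤ 4 / (x * y)`. Thus `x (y - 1) F x y` and `y (x - 1) F y x` lie
in `[0, 4]`, the correction terms in `(0, 1]`, and `|Q̃ x y| ≤ 1 / (x * y)`. The squares over
pairs of primes are then dominated by `(1 / p_i ^ 2) (1 / p_j ^ 2)`, a product of summable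
sequences. -/

section FBounds

variable {x y : ℝ}

lemma inv_rpow_le_one_div_mul (hx : 2 ≤ x) (hy : 2 ≤ y) : (y ^ x)⁻¹ ≤ 1 / (x * y) := by
  rw [one_div]
  refine inv_anti₀ (by positivity) ?_
  have bernoulli : 1 + (x - 1) * (y - 1) ≤ y ^ (x - 1) := by
    simpa using one_add_mul_self_le_rpow_one_add (s := y - 1) (by linarith) (p := x - 1)
      (by linarith)
  rw [Real.rpow_sub_one (by positivity), le_div_iff₀ (by positivity)] at bernoulli
  have : 0 ≤ (x - 1) * (y - 2) * y := by
    have := mul_nonneg (sub_nonneg.2 (by linarith : 1 ≤ x)) (sub_nonneg.2 hy)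
    exact mul_nonneg this (by linarith)
  nlinarith

lemma rpow_neg_rpow_succ_le (hx : 2 ≤ x) (hy : 2 ≤ y) (k : ℕ) :
    y ^ (-(x ^ ((k : ℝ) + 1))) ≤ (y ^ x)⁻¹ ^ (k + 1) := by
  have hk : x * (k + 1) ≤ x ^ ((k : ℝ) + 1) := by
    have : (k : ℝ) + 1 ≤ x ^ k := by
      nlinarith [one_add_mul_sub_le_pow (a := x) (by linarith) k]
    rw [Real.rpow_add_one (by positivity), Real.rpow_natCast]
    nlinarith
  calc y ^ (-(x ^ ((k : ℝ) + 1))) ≤ y ^ (-(x * (k + 1))) :=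
        Real.rpow_le_rpow_of_exponent_le (by linarith) (by linarith)
    _ = (y ^ x)⁻¹ ^ (k + 1) := by
        rw [Real.rpow_neg (by positivity), Real.rpow_mul (by positivity), inv_pow]
        norm_cast

lemma F_summand_le (hx : 2 ≤ x) (hy : 2 ≤ y) (k : ℕ) :
    x ^ (k : ℝ) * y ^ (-(x ^ ((k : ℝ) + 1))) / (1 - y ^ (-(x ^ ((k : ℝ) + 1)))) ^ 2 ≤
      16 / 9 * (y ^ x)⁻¹ * (1 / 2) ^ k := by
  set q := (y ^ x)⁻¹
  set u := y ^ (-(x ^ ((k : ℝ) + 1)))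
  have hq : q ≤ 1 / (x * y) := inv_rpow_le_one_div_mul hx hy
  have hxq : x * q ≤ 1 / 2 := by
    calc x * q ≤ x * (1 / (x * y)) := by gcongr
      _ = 1 / y := by field_simp
      _ ≤ 1 / 2 := by gcongr
  have hu : u ≤ q ^ (k + 1) := rpow_neg_rpow_succ_le hx hy k
  have hu_le : u ≤ 1 / 4 := by
    have hq1 : q ≤ 1 / 4 :=
      hq.trans (by rw [div_le_div_iff₀ (by positivity) (by norm_num)]; nlinarith)
    calc u ≤ q ^ (k + 1) := hu
      _ ≤ q := pow_le_of_le_one (by positivity) (by linarith) (by omega)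
      _ ≤ 1 / 4 := hq1
  have hden : 9 / 16 ≤ (1 - u) ^ 2 := by nlinarith [show 0 < u by positivity]
  rw [Real.rpow_natCast]
  calc x ^ k * u / (1 - u) ^ 2 ≤ x ^ k * u / (9 / 16) := by gcongr
    _ = 16 / 9 * (x ^ k * u) := by ring
    _ ≤ 16 / 9 * (x ^ k * q ^ (k + 1)) := by gcongr
    _ = 16 / 9 * q * (x * q) ^ k := by ring
    _ ≤ 16 / 9 * q * (1 / 2) ^ k := by gcongr

lemma F_nonneg (hx : 0 ≤ x) (hy : 0 ≤ y) : 0 ≤ F x y :=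
  tsum_nonneg fun k => by positivity

lemma F_le (hx : 2 ≤ x) (hy : 2 ≤ y) : F x y ≤ 4 / (x * y) := by
  have hmaj : Summable fun k : ℕ => 16 / 9 * (y ^ x)⁻¹ * (1 / 2 : ℝ) ^ k :=
    (summable_geometric_of_lt_one (by norm_num) (by norm_num)).mul_left _
  have hq := inv_rpow_le_one_div_mul hx hy
  calc F x y ≤ ∑' k : ℕ, 16 / 9 * (y ^ x)⁻¹ * (1 / 2 : ℝ) ^ k :=
        Summable.tsum_le_tsum (F_summand_le hx hy)
          (hmaj.of_nonneg_of_le (fun k => by positivity) (F_summand_le hx hy)) hmaj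
    _ = 32 / 9 * (y ^ x)⁻¹ := by
        rw [tsum_mul_left, tsum_geometric_of_lt_one (by norm_num) (by norm_num)]; ring
    _ ≤ 4 / (x * y) := by
        rw [div_eq_mul_one_div 4]
        nlinarith [show 0 ≤ (y ^ x)⁻¹ by positivity]

end FBounds

section QNCtildeBound

variable {x y : ℝ}

lemma mul_sub_one_mul_F_mem_Icc (hx : 2 ≤ x) (hy : 2 ≤ y) :
    x * (y - 1) * F x y ∈ Set.Icc 0 4 := by
  have hF := F_le hx hy
  have hF0 := F_nonneg (x := x) (y := y) (by linarith) (by linarith)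
  rw [le_div_iff₀ (by positivity)] at hF
  constructor
  · have : 0 ≤ y - 1 := by linarith
    positivity
  · nlinarith [mul_nonneg (by linarith : (0 : ℝ) ≤ x) hF0]

lemma abs_QNCtilde_le (hx : 2 ≤ x) (hy : 2 ≤ y) : |QNCtilde x y| ≤ 1 / (x * y) := by
  obtain ⟨hA0, hA4⟩ := mul_sub_one_mul_F_mem_Icc hx hy
  obtain ⟨hB0, hB4⟩ := mul_sub_one_mul_F_mem_Icc hy hx
  have hc : 0 < 1 / (y - 1) ∧ 1 / (y - 1) ≤ 1 :=
    ⟨by apply div_pos <;> linarith, by rw [div_le_one₀] <;> linarith⟩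
  have hd : 0 < 1 / (x - 1) ∧ 1 / (x - 1) ≤ 1 :=
    ⟨by apply div_pos <;> linarith, by rw [div_le_one₀] <;> linarith⟩
  have hsum : |x * (y - 1) * F x y - y * (x - 1) * F y x + (1 / (y - 1) - 1 / (x - 1))| ≤ 5 :=
    abs_le.2 ⟨by linarith, by linarith⟩
  rw [QNCtilde, QNC, ← mul_add, abs_mul, abs_of_pos (by positivity)]
  calc 1 / (12 * x * y) * _ ≤ 1 / (12 * x * y) * 5 := by gcongr
    _ ≤ 1 / (x * y) := by
        rw [mul_assoc 12, ← div_div, div_mul_eq_mul_div,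
          div_le_div_iff_of_pos_right (by positivity)]
        norm_num

end QNCtildeBound

lemma summable_one_div_nthPrime_sq : Summable fun i => 1 / (nthPrime i : ℝ) ^ 2 :=
  (Real.summable_one_div_nat_pow.2 one_lt_two).comp_injective
    (Nat.nth_injective Nat.infinite_setOfPred_prime)

/-- The family `(i, j) ↦ |Q̃(p_i, p_j)|²` over pairs of positive integers
(reindexed from `0`) IS summable: `∑_{i,j} |Q̃(p_i, p_j)|² < ∞`. -/
theorem summable_sq_abs_Rtilde :
    Summable (fun ij : ℕ × ℕ =>
      |QNCtilde (nthPrime ij.1 : ℝ) (nthPrime ij.2 : ℝ)| ^ 2) := by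
  have two_le (i : ℕ) : (2 : ℝ) ≤ nthPrime i := by
    exact_mod_cast (Nat.prime_nth_prime i).two_le
  refine (summable_one_div_nthPrime_sq.mul_of_nonneg summable_one_div_nthPrime_sq
    (fun _ => by positivity) (fun _ => by positivity)).of_nonneg_of_le
    (fun _ => by positivity) fun ij => ?_
  calc |QNCtilde (nthPrime ij.1) (nthPrime ij.2)| ^ 2
      ≤ (1 / ((nthPrime ij.1 : ℝ) * nthPrime ij.2)) ^ 2 := by
        gcongr; exact abs_QNCtilde_le (two_le _) (two_le _)
    _ = 1 / (nthPrime ij.1 : ℝ) ^ 2 * (1 / (nthPrime ij.2 : ℝ) ^ 2) := by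
        rw [div_pow, mul_pow]; ring
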